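/- The Kauffman bracket of a diagram with n crossings, computed by summing over all 2^n states, satisfies: the maximal possible A-degree contribution of a state with s_+ loops after all-A smoothing is n + 2(s_+ - 1), and the minimal possible is -n - 2(s_- - 1) where s_- is the number of loops after all-B smoothing; hence span⟨D⟩ ≤ 2n + 2(s_+ + s_-) - 4. -/

import Mathlib

open LaurentPolynomial Pointwise

/-- The span of a Laurent polynomial: maximal minus minimal exponent with
nonzero coefficient (and `0` for the zero polynomial). -/
noncomputable def laurentSpan (f : LaurentPolynomial ℤ) : ℤ :=
  if h : f.coeff.support.Nonempty then f.coeff.support.max' h - f.coeff.support.min' h else 0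

/-- Generic monotonicity: flipping entries toward the constant-`v` state does not
decrease `(#v) - (#!v) + 2·loops`. -/
lemma kauffman_key (C : Type) [Fintype C] [DecidableEq C]
    (loops : (C → Bool) → ℕ)
    (hflip : ∀ (σ : C → Bool) (c : C),
      loops (Function.update σ c (!(σ c))) = loops σ + 1 ∨
      loops (Function.update σ c (!(σ c))) + 1 = loops σ)
    (v : Bool) :
    ∀ (m : ℕ) (σ : C → Bool), (Finset.univ.filter fun c => σ c = !v).card = m →
      ((Finset.univ.filter fun c => σ c = v).card : ℤ)
        - ((Finset.univ.filter fun c => σ c = !v).card : ℤ) + 2 * loops σ ≤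
      (Fintype.card C : ℤ) + 2 * loops (fun _ => v) := by
  intro m
  induction m with
  | zero =>
    intro σ hσ
    have hall : σ = fun _ => v := by
      funext c
      have hc : c ∉ Finset.univ.filter fun c => σ c = !v := by
        rw [Finset.card_eq_zero] at hσ
        simp [hσ]
      simp only [Finset.mem_filter, Finset.mem_univ, true_and] at hc
      revert hc; cases σ c <;> cases v <;> simp
    subst hall
    have h1 : (Finset.univ.filter fun _ : C => v = v) = Finset.univ := by simp
    have h2 : (Finset.univ.filter fun _ : C => v = !v) = ∅ := by
      apply Finset.filter_false_of_mem; intro x _; cases v <;> simp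
    rw [h1, h2]
    simp [Finset.card_univ]
  | succ k ih =>
    intro σ hσ
    have hne : (Finset.univ.filter fun c => σ c = !v).Nonempty := by
      rw [← Finset.card_pos, hσ]; omega
    obtain ⟨c, hc⟩ := hne
    simp only [Finset.mem_filter, Finset.mem_univ, true_and] at hc
    set σ' := Function.update σ c (!(σ c)) with hσ'def
    have hσ'c : σ' c = v := by simp [hσ'def, Function.update, hc]
    have hσ'x : ∀ x, x ≠ c → σ' x = σ x := by
      intro x hx; rw [hσ'def, Function.update_of_ne hx]
    have hA : (Finset.univ.filter fun x => σ' x = v) =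
        insert c (Finset.univ.filter fun x => σ x = v) := by
      ext x
      simp only [Finset.mem_filter, Finset.mem_univ, true_and, Finset.mem_insert]
      by_cases hx : x = c
      · subst hx; simp [hσ'c]
      · rw [hσ'x x hx]; simp [hx]
    have hB : (Finset.univ.filter fun x => σ' x = !v) =
        (Finset.univ.filter fun x => σ x = !v).erase c := by
      ext x
      simp only [Finset.mem_filter, Finset.mem_univ, true_and, Finset.mem_erase]
      by_cases hx : x = c
      · subst hx
        simp only [hσ'c, ne_eq, not_true_eq_false, false_and, iff_false]
        cases v <;> simp
      · rw [hσ'x x hx]; simp [hx]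
    have hcnotin : c ∉ (Finset.univ.filter fun x => σ x = v) := by
      simp only [Finset.mem_filter, Finset.mem_univ, true_and, hc]
      cases v <;> simp
    have hAcard : (Finset.univ.filter fun x => σ' x = v).card =
        (Finset.univ.filter fun x => σ x = v).card + 1 := by
      rw [hA, Finset.card_insert_of_notMem hcnotin]
    have hBcard : (Finset.univ.filter fun x => σ' x = !v).card = k := by
      rw [hB, Finset.card_erase_of_mem (by simp [hc]), hσ]
      omega
    have hIH := ih σ' hBcard
    rw [hAcard, hBcard] at hIH
    rw [hσ]
    rcases hflip σ c with h | h
    · rw [← hσ'def] at h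
      rw [h] at hIH
      push_cast at hIH ⊢
      linarith
    · rw [← hσ'def] at h
      have hL : (loops σ : ℤ) = (loops σ' : ℤ) + 1 := by exact_mod_cast h.symm
      push_cast at hIH ⊢
      linarith

lemma kauffman_supp_base :
    ((-T 2 - T (-2) : LaurentPolynomial ℤ)).coeff.support ⊆ ({2, -2} : Finset ℤ) := by
  intro x hx
  have h1 : ((-T 2 - T (-2) : LaurentPolynomial ℤ)).coeff.support ⊆
      (-T 2 : LaurentPolynomial ℤ).coeff.support ∪ (T (-2) : LaurentPolynomial ℤ).coeff.support := by
    rw [AddMonoidAlgebra.coeff_sub]; exact Finsupp.support_sub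
  have h2 := h1 hx
  rw [AddMonoidAlgebra.coeff_neg, Finsupp.support_neg] at h2
  rcases Finset.mem_union.mp h2 with h | h
  · have := Finsupp.support_single_subset h
    simp only [Finset.mem_singleton] at this
    simp [this]
  · have := Finsupp.support_single_subset h
    simp only [Finset.mem_singleton] at this
    simp [this]

lemma kauffman_supp_pow (k : ℕ) :
    ∀ x ∈ ((-T 2 - T (-2) : LaurentPolynomial ℤ) ^ k).coeff.support,
      -(2 * (k : ℤ)) ≤ x ∧ x ≤ 2 * (k : ℤ) := by
  induction k with
  | zero =>
    intro x hx
    simp only [pow_zero] at hx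
    have : ((1 : LaurentPolynomial ℤ)).coeff.support ⊆ {0} := by
      have : (1 : LaurentPolynomial ℤ).coeff = Finsupp.single 0 1 := rfl
      rw [this]; exact Finsupp.support_single_subset
    have hx0 := this hx
    simp only [Finset.mem_singleton] at hx0
    subst hx0; norm_num
  | succ k ih =>
    intro x hx
    rw [pow_succ] at hx
    have h := AddMonoidAlgebra.support_coeff_mul_subset _ _ hx
    obtain ⟨y, hy, z, hz, hyz⟩ := Finset.mem_add.mp h
    have hy' := ih y hy
    have hz' := kauffman_supp_base hz
    have hz2 : z = 2 ∨ z = -2 := by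
      simpa using hz'
    push_cast
    rcases hz2 with rfl | rfl <;> constructor <;> linarith [hy'.1, hy'.2]

/-- **Degree bounds in the Kauffman state sum.**
A state `σ : C → Bool` of an `n`-crossing diagram assigns to each crossing an
`A`-smoothing (`true`) or a `B`-smoothing (`false`); `loops σ ≥ 1` is the number
of loops of the smoothed diagram, and changing the smoothing at one crossing
changes `loops` by exactly `±1` (hypothesis `hflip`). With `a σ`, `b σ` the
numbers of `A`- and `B`-smoothings, the Kauffman bracket is
`⟨D⟩ = Σ_σ A^{a(σ)-b(σ)}·(-A²-A⁻²)^{loops σ - 1}`. Let `s₊`, `s₋` be the loop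
numbers of the all-`A` and all-`B` states. Then the top degree of any state
contribution is at most `n + 2(s₊ - 1)`, the bottom degree is at least
`-n - 2(s₋ - 1)`, and hence `span ⟨D⟩ ≤ 2n + 2(s₊ + s₋) - 4`. -/
theorem kauffman_state_sum_degree_bounds
    (C : Type) [Fintype C] [DecidableEq C]
    (loops : (C → Bool) → ℕ)
    (hloops : ∀ σ, 1 ≤ loops σ)
    (hflip : ∀ (σ : C → Bool) (c : C),
      loops (Function.update σ c (!(σ c))) = loops σ + 1 ∨
      loops (Function.update σ c (!(σ c))) + 1 = loops σ)
    (n : ℕ) (hn : n = Fintype.card C)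
    (a b : (C → Bool) → ℕ)
    (ha : ∀ σ, a σ = (Finset.univ.filter fun c => σ c = true).card)
    (hb : ∀ σ, b σ = (Finset.univ.filter fun c => σ c = false).card)
    (splus sminus : ℕ)
    (hsp : splus = loops (fun _ => true))
    (hsm : sminus = loops (fun _ => false))
    (bracket : LaurentPolynomial ℤ)
    (hbracket : bracket =
      ∑ σ : C → Bool, T ((a σ : ℤ) - (b σ : ℤ)) * (-T 2 - T (-2)) ^ (loops σ - 1)) :
    (∀ σ : C → Bool,
        (a σ : ℤ) - (b σ : ℤ) + 2 * ((loops σ : ℤ) - 1) ≤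
          (n : ℤ) + 2 * ((splus : ℤ) - 1)) ∧
    (∀ σ : C → Bool,
        -(n : ℤ) - 2 * ((sminus : ℤ) - 1) ≤
          (a σ : ℤ) - (b σ : ℤ) - 2 * ((loops σ : ℤ) - 1)) ∧
    laurentSpan bracket ≤ 2 * (n : ℤ) + 2 * ((splus : ℤ) + (sminus : ℤ)) - 4 := by
  have hpart1 : ∀ σ : C → Bool,
      (a σ : ℤ) - (b σ : ℤ) + 2 * ((loops σ : ℤ) - 1) ≤
        (n : ℤ) + 2 * ((splus : ℤ) - 1) := by
    intro σ
    have h := kauffman_key C loops hflip true _ σ rfl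
    rw [ha σ, hb σ, hsp, hn]
    simp only [Bool.not_true] at h
    linarith
  have hpart2 : ∀ σ : C → Bool,
      -(n : ℤ) - 2 * ((sminus : ℤ) - 1) ≤
        (a σ : ℤ) - (b σ : ℤ) - 2 * ((loops σ : ℤ) - 1) := by
    intro σ
    have h := kauffman_key C loops hflip false _ σ rfl
    rw [ha σ, hb σ, hsm, hn]
    simp only [Bool.not_false] at h
    linarith
  refine ⟨hpart1, hpart2, ?_⟩
  -- support bounds on each term, hence on bracket
  have hsupp : ∀ x ∈ bracket.coeff.support,
      -(n : ℤ) - 2 * ((sminus : ℤ) - 1) ≤ x ∧ x ≤ (n : ℤ) + 2 * ((splus : ℤ) - 1) := by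
    intro x hx
    rw [hbracket, AddMonoidAlgebra.coeff_sum] at hx
    have h := Finsupp.support_finset_sum hx
    obtain ⟨σ, _, hxσ⟩ := Finset.mem_biUnion.mp h
    have h2 := AddMonoidAlgebra.support_coeff_mul_subset _ _ hxσ
    obtain ⟨y, hy, z, hz, hyz⟩ := Finset.mem_add.mp h2
    have hy' : y = (a σ : ℤ) - (b σ : ℤ) := by
      have := Finsupp.support_single_subset hy
      simpa using this
    have hz' := kauffman_supp_pow (loops σ - 1) z hz
    have hL : ((loops σ - 1 : ℕ) : ℤ) = (loops σ : ℤ) - 1 := by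
      have := hloops σ; omega
    rw [hL] at hz'
    have hx_eq : x = y + z := hyz.symm
    constructor
    · have := hpart2 σ
      rw [hx_eq, hy']
      linarith [hz'.1]
    · have := hpart1 σ
      rw [hx_eq, hy']
      linarith [hz'.2]
  unfold laurentSpan
  split_ifs with h
  · have hmax := (hsupp _ (bracket.coeff.support.max'_mem h)).2
    have hmin := (hsupp _ (bracket.coeff.support.min'_mem h)).1
    linarith
  · have h1 : 1 ≤ splus := hsp ▸ hloops _
    have h2 : 1 ≤ sminus := hsm ▸ hloops _
    have : (1 : ℤ) ≤ splus := by exact_mod_cast h1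
    have : (1 : ℤ) ≤ sminus := by exact_mod_cast h2
    have : (0 : ℤ) ≤ n := Int.natCast_nonneg n
    linarith
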